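/- arXiv:2201.05246 — 4 statements merged into one kernel-verified Lean document; each statement's English description precedes it below -/
import Mathlib

section
/- For every ε with 0 < ε < π/4, the function φ₀ converges to 1 uniformly on the sector {r·e^{iθ} : r ≥ 0, |θ| ≤ π/4 − ε} as |z| → ∞; that is, for every δ > 0 there exists R > 0 such that |φ₀(r·e^{iθ}) − 1| < δ whenever r > R and |θ| ≤ π/4 − ε. -/
/-!
Along the ray `z = r u` with `|u| = 1`, `Re u > 0`, `Re u² > 0`, the substitution `w = t z` turns
the integral in `φ₀` into `u ∫₀^r e^{-u² s²} ds`. The complete integral `u ∫₀^∞ e^{-u² s²} ds`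
equals `√π / 2`, so `φ₀(z) - 1` is minus the Gaussian tail `(u / √π) ∫_r^∞ e^{-u² s²} ds` minus
`e^{-z²} / 2`. On the sector, `u = e^{iθ}` has `Re u² = cos 2θ ≥ sin 2ε > 0`, so both terms are
`O(e^{-r² sin 2ε})` uniformly in `θ`.
-/

open Complex MeasureTheory Filter Topology

/-- Gross's function `φ₀(z) = (1/2) [ (2/√π) ∫₀^z e^{-w²} dw - e^{-z²} + 1 ]`,
with the integral taken along the straight line segment from `0` to `z`. -/
noncomputable def phi0 (z : ℂ) : ℂ :=
  (1 / 2) * ((2 / (Real.sqrt Real.pi : ℂ)) *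
      (∫ t in (0:ℝ)..1, z * Complex.exp (-((t : ℂ) * z) ^ 2))
    - Complex.exp (-z ^ 2) + 1)

open Set

lemma tendsto_exp_neg_mul_sq_atTop {c : ℝ} (hc : 0 < c) :
    Tendsto (fun s : ℝ ↦ Real.exp (-c * s ^ 2)) atTop (𝓝 0) :=
  Real.tendsto_exp_atBot.comp <|
    (tendsto_pow_atTop two_ne_zero).const_mul_atTop_of_neg (neg_lt_zero.2 hc)

lemma integral_Ioi_mul_exp_neg_mul_sq {c : ℝ} (hc : 0 < c) (r : ℝ) :
    ∫ s in Ioi r, s * Real.exp (-c * s ^ 2) = Real.exp (-c * r ^ 2) / (2 * c) := by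
  have hderiv (x : ℝ) (_ : x ∈ Ici r) : HasDerivAt (fun s ↦ -(2 * c)⁻¹ * Real.exp (-c * s ^ 2))
      (x * Real.exp (-c * x ^ 2)) x := by
    have := (((hasDerivAt_pow 2 x).const_mul (-c)).exp).const_mul (-(2 * c)⁻¹)
    refine this.congr_deriv ?_
    norm_num
    field_simp
  have hlim : Tendsto (fun s ↦ -(2 * c)⁻¹ * Real.exp (-c * s ^ 2)) atTop (𝓝 0) := by
    simpa using (tendsto_exp_neg_mul_sq_atTop hc).const_mul (-(2 * c)⁻¹)
  rw [integral_Ioi_of_hasDerivAt_of_tendsto' hderiv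
    (integrable_mul_exp_neg_mul_sq hc).integrableOn hlim]
  field_simp
  ring

/-- Proof: insert the factor `s / r ≥ 1` into the integrand and integrate `s e^{-c s²}` exactly. -/
lemma norm_integral_Ioi_cexp_neg_mul_sq_le {b : ℂ} {c r : ℝ} (hc : 0 < c) (hcb : c ≤ b.re)
    (hr : 0 < r) :
    ‖∫ s in Ioi r, cexp (-b * (s : ℂ) ^ 2)‖ ≤ Real.exp (-c * r ^ 2) / (2 * c * r) := by
  have hint : IntegrableOn (fun s : ℝ ↦ r⁻¹ * (s * Real.exp (-c * s ^ 2))) (Ioi r) :=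
    ((integrable_mul_exp_neg_mul_sq hc).const_mul r⁻¹).integrableOn
  calc ‖∫ s in Ioi r, cexp (-b * (s : ℂ) ^ 2)‖
      ≤ ∫ s in Ioi r, r⁻¹ * (s * Real.exp (-c * s ^ 2)) := by
        refine norm_integral_le_of_norm_le hint (ae_restrict_of_forall_mem measurableSet_Ioi ?_)
        intro s (hs : r < s)
        rw [norm_cexp_neg_mul_sq, inv_mul_eq_div, le_div_iff₀ hr]
        have : Real.exp (-b.re * s ^ 2) ≤ Real.exp (-c * s ^ 2) :=
          Real.exp_le_exp.2 (by nlinarith [sq_nonneg s])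
        nlinarith [Real.exp_pos (-b.re * s ^ 2)]
    _ = Real.exp (-c * r ^ 2) / (2 * c * r) := by
        rw [integral_const_mul, integral_Ioi_mul_exp_neg_mul_sq hc]
        field_simp

/-- The principal square root of `π / u²` is `√π / u`, because the latter has positive real part. -/
lemma mul_integral_Ioi_cexp_neg_sq_mul_sq {u : ℂ} (hu : 0 < u.re) (hu2 : 0 < (u ^ 2).re) :
    u * ∫ s in Ioi (0 : ℝ), cexp (-u ^ 2 * (s : ℂ) ^ 2) = Real.sqrt Real.pi / 2 := by
  have hu0 : u ≠ 0 := by rintro rfl; simp at hu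
  have hsqrt : ((Real.sqrt Real.pi : ℂ) / u) ^ 2 = Real.pi / u ^ 2 := by
    rw [div_pow, ← ofReal_pow, Real.sq_sqrt Real.pi_pos.le]
  have hre : 0 < ((Real.sqrt Real.pi : ℂ) / u).re := by
    rw [div_re, ofReal_re, ofReal_im, zero_mul, zero_div, add_zero]
    exact div_pos (mul_pos (Real.sqrt_pos.2 Real.pi_pos) hu) (normSq_pos.2 hu0)
  rw [integral_gaussian_complex_Ioi hu2, ← hsqrt, one_div, sq_cpow_two_inv hre]
  field_simp

lemma integral_cexp_neg_sq_along_ray (r : ℝ) (u : ℂ) :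
    ∫ t in (0 : ℝ)..1, (r * u) * cexp (-((t : ℂ) * (r * u)) ^ 2)
      = u * ∫ s in (0 : ℝ)..r, cexp (-u ^ 2 * (s : ℂ) ^ 2) := by
  set f : ℝ → ℂ := fun s ↦ u * cexp (-u ^ 2 * (s : ℂ) ^ 2)
  calc ∫ t in (0 : ℝ)..1, (r * u) * cexp (-((t : ℂ) * (r * u)) ^ 2)
      = ∫ t in (0 : ℝ)..1, r • f (t * r) := by
        congr 1 with t
        simp only [f, real_smul]
        push_cast
        ring_nf
    _ = ∫ s in (0 : ℝ)..r, f s := by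
        rw [intervalIntegral.integral_smul, intervalIntegral.smul_integral_comp_mul_right,
          zero_mul, one_mul]
    _ = u * ∫ s in (0 : ℝ)..r, cexp (-u ^ 2 * (s : ℂ) ^ 2) :=
        intervalIntegral.integral_const_mul _ _

lemma phi0_ofReal_mul_sub_one {u : ℂ} (hu : 0 < u.re) (hu2 : 0 < (u ^ 2).re) {r : ℝ}
    (hr : 0 ≤ r) :
    phi0 (r * u) - 1
      = -((Real.sqrt Real.pi : ℂ)⁻¹ * (u * ∫ s in Ioi r, cexp (-u ^ 2 * (s : ℂ) ^ 2)))
        - (1 / 2) * cexp (-(r * u) ^ 2) := by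
  have hint := integrable_cexp_neg_mul_sq hu2
  have hsplit : ∫ s in (0 : ℝ)..r, cexp (-u ^ 2 * (s : ℂ) ^ 2)
      = (∫ s in Ioi (0 : ℝ), cexp (-u ^ 2 * (s : ℂ) ^ 2))
        - ∫ s in Ioi r, cexp (-u ^ 2 * (s : ℂ) ^ 2) := by
    rw [intervalIntegral.integral_of_le hr, eq_sub_iff_add_eq, ← setIntegral_union
      (Ioc_disjoint_Ioi le_rfl) measurableSet_Ioi hint.integrableOn hint.integrableOn,
      Ioc_union_Ioi_eq_Ioi hr]
  have hπ : (Real.sqrt Real.pi : ℂ) ≠ 0 := ofReal_ne_zero.2 (Real.sqrt_pos.2 Real.pi_pos).ne'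
  rw [phi0, integral_cexp_neg_sq_along_ray, hsplit, mul_sub,
    mul_integral_Ioi_cexp_neg_sq_mul_sq hu hu2]
  field_simp
  ring

lemma norm_phi0_ofReal_mul_sub_one_le {u : ℂ} (hu1 : ‖u‖ = 1) (hu : 0 < u.re) {c r : ℝ}
    (hc : 0 < c) (hcu : c ≤ (u ^ 2).re) (hr : 0 < r) :
    ‖phi0 (r * u) - 1‖
      ≤ (Real.sqrt Real.pi)⁻¹ * (Real.exp (-c * r ^ 2) / (2 * c * r))
        + 1 / 2 * Real.exp (-c * r ^ 2) := by
  have hexp : ‖cexp (-(r * u) ^ 2)‖ ≤ Real.exp (-c * r ^ 2) := by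
    rw [show -(r * u) ^ 2 = -u ^ 2 * (r : ℂ) ^ 2 by ring, norm_cexp_neg_mul_sq]
    exact Real.exp_le_exp.2 (by nlinarith [sq_nonneg r])
  have htail := norm_integral_Ioi_cexp_neg_mul_sq_le hc hcu hr
  rw [phi0_ofReal_mul_sub_one hu (hc.trans_le hcu) hr.le]
  refine (norm_sub_le _ _).trans ?_
  rw [norm_neg, norm_mul, norm_mul, norm_mul, norm_inv, hu1, one_mul, norm_real,
    Real.norm_of_nonneg (Real.sqrt_nonneg _)]
  gcongr
  norm_num

lemma tendsto_gaussian_tail_bound {c : ℝ} (hc : 0 < c) (K : ℝ) :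
    Tendsto (fun r : ℝ ↦ K * (Real.exp (-c * r ^ 2) / (2 * c * r)) + 1 / 2 * Real.exp (-c * r ^ 2))
      atTop (𝓝 0) := by
  have hexp := tendsto_exp_neg_mul_sq_atTop hc
  have hinv : Tendsto (fun r : ℝ ↦ (2 * c * r)⁻¹) atTop (𝓝 0) :=
    tendsto_inv_atTop_zero.comp (tendsto_id.const_mul_atTop (by positivity))
  simpa only [div_eq_mul_inv, one_mul, mul_zero, add_zero] using
    ((hexp.mul hinv).const_mul K).add (hexp.const_mul 2⁻¹)

lemma sin_two_mul_le_cos_two_mul {ε θ : ℝ} (hε : 0 ≤ ε) (hθ : |θ| ≤ Real.pi / 4 - ε) :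
    Real.sin (2 * ε) ≤ Real.cos (2 * θ) := by
  rw [← Real.cos_pi_div_two_sub, ← Real.cos_abs (2 * θ), abs_mul, abs_two]
  exact Real.cos_le_cos_of_nonneg_of_le_pi (by positivity) (by linarith [Real.pi_pos])
    (by linarith)

theorem phi0_tendsto_one_uniformly_on_right_sector
    (ε : ℝ) (hε0 : 0 < ε) (hε : ε < Real.pi / 4) :
    ∀ δ : ℝ, 0 < δ → ∃ R : ℝ, 0 < R ∧ ∀ r : ℝ, R < r → ∀ θ : ℝ, |θ| ≤ Real.pi / 4 - ε →
      ‖phi0 ((r : ℂ) * Complex.exp (θ * Complex.I)) - 1‖ < δ := by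
  intro δ hδ
  have hc : 0 < Real.sin (2 * ε) := Real.sin_pos_of_pos_of_lt_pi (by linarith) (by linarith)
  obtain ⟨a, ha⟩ := eventually_atTop.1
    ((tendsto_gaussian_tail_bound hc (Real.sqrt Real.pi)⁻¹).eventually_lt_const hδ)
  refine ⟨max a 1, by positivity, fun r hr θ hθ ↦ ?_⟩
  have hcos : 0 < Real.cos θ := Real.cos_pos_of_mem_Ioo ⟨by linarith [neg_abs_le θ],
    by linarith [le_abs_self θ]⟩
  have hsq : (cexp (θ * I) ^ 2).re = Real.cos (2 * θ) := by
    rw [sq, ← Complex.exp_add, ← two_mul, ← mul_assoc, ← ofReal_ofNat, ← ofReal_mul,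
      exp_ofReal_mul_I_re]
  refine (norm_phi0_ofReal_mul_sub_one_le (norm_exp_ofReal_mul_I θ)
    (by rwa [exp_ofReal_mul_I_re]) hc (hsq ▸ sin_two_mul_le_cos_two_mul hε0.le hθ)
    (by linarith [le_max_right a 1])).trans_lt (ha r (le_max_left a 1 |>.trans hr.le))
end

section
/- Let P = P₁ ∪ P₂ ∪ P₃ ∪ P₄ where P₁ = ℚ ∩ [0,1), P₂ = {−z : z ∈ P₁}, P₃ = {i·z : z ∈ P₁}, P₄ = {−i·z : z ∈ P₁}, regarded as a subset of ℂ, and let (β_n)_{n∈ℕ} be any enumeration of P (a surjection from ℕ onto P with |β_n| < 1 for all n). Then for every ω ∈ ℂ there exists a set A ⊆ ℕ such that ∑_{n∈A} |β_n| < ∞ and ∑_{n∈A} β_n = ω. -/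
/-!
Greedy step: subtracting from a positive remainder `x` a rational in `(a * x, b * x)`, with
`0 < a`, `b ≤ 1` and `b * (1 - a) ≤ a`, makes the remainders decay geometrically and the
subtracted terms strictly decrease, so every `s > 0` is the sum of distinct rationals in `(0, ε)`.
Applying this to the positive and negative parts of `Re ω` and `Im ω` and placing the four
families on the rays `ℝ₊`, `-ℝ₊`, `i ℝ₊`, `-i ℝ₊` gives an injective family in `P` summing to `ω`;
in the finite-dimensional space `ℂ` it is absolutely summable, and picking one index of `β` over
each of its values gives `A`.
-/

open Complex Filter Topology

/-- `P₁ = ℚ ∩ [0,1)` regarded as a subset of `ℂ`. -/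
def P1 : Set ℂ := {z : ℂ | ∃ q : ℚ, 0 ≤ q ∧ q < 1 ∧ z = (q : ℂ)}

/-- `P = P₁ ∪ (−P₁) ∪ (i·P₁) ∪ (−i·P₁)`. -/
def P : Set ℂ :=
  P1 ∪ ((fun z => -z) '' P1) ∪ ((fun z => Complex.I * z) '' P1) ∪
    ((fun z => -Complex.I * z) '' P1)

section GreedyRemainders

variable {f : ℝ → ℝ} {a b s : ℝ}

theorem iterate_sub_pos (hb : b ≤ 1) (hf : ∀ x, 0 < x → a * x < f x ∧ f x < b * x)
    (hs : 0 < s) (k : ℕ) : 0 < (fun x => x - f x)^[k] s := by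
  induction k with
  | zero => exact hs
  | succ k ih =>
    rw [Function.iterate_succ_apply']
    nlinarith [(hf _ ih).2]

theorem iterate_sub_le (hb : b ≤ 1) (hf : ∀ x, 0 < x → a * x < f x ∧ f x < b * x)
    (hs : 0 < s) (k : ℕ) : (fun x => x - f x)^[k] s ≤ (1 - a) ^ k * s := by
  induction k with
  | zero => simp
  | succ k ih =>
    have hpos := iterate_sub_pos hb hf hs k
    have h1a : 0 ≤ 1 - a := by nlinarith [hf _ hpos]
    rw [Function.iterate_succ_apply', pow_succ]
    nlinarith [(hf _ hpos).1]

theorem strictAnti_comp_iterate_sub (ha : 0 < a) (hb : b ≤ 1) (hab : b * (1 - a) ≤ a)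
    (hf : ∀ x, 0 < x → a * x < f x ∧ f x < b * x) (hs : 0 < s) :
    StrictAnti fun k => f ((fun x => x - f x)^[k] s) := by
  refine strictAnti_nat_of_succ_lt fun k => ?_
  set r := (fun x => x - f x)^[k] s
  have hr := iterate_sub_pos hb hf hs k
  have hr' := iterate_sub_pos hb hf hs (k + 1)
  rw [Function.iterate_succ_apply'] at hr' ⊢
  obtain ⟨hlo, hhi⟩ := hf r hr
  have hb0 : 0 < b := by nlinarith
  calc f (r - f r) < b * (r - f r) := (hf _ hr').2
    _ ≤ b * ((1 - a) * r) := by gcongr; linarith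
    _ ≤ a * r := by nlinarith
    _ < f r := hlo

theorem hasSum_comp_iterate_sub (ha : 0 < a) (hb : b ≤ 1)
    (hf : ∀ x, 0 < x → a * x < f x ∧ f x < b * x) (hs : 0 < s) :
    HasSum (fun k => f ((fun x => x - f x)^[k] s)) s := by
  set r := fun k => (fun x => x - f x)^[k] s
  have hpartial : ∀ n, ∑ k ∈ Finset.range n, f (r k) = s - r n := fun n => by
    have hstep : ∀ k, f (r k) = r k - r (k + 1) := fun k => by
      simp only [r, Function.iterate_succ_apply']; ring
    rw [Finset.sum_congr rfl fun k _ => hstep k, Finset.sum_range_sub']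
    rfl
  have hr : Tendsto r atTop (𝓝 0) := by
    have h0a : 0 ≤ 1 - a := by nlinarith [hf s hs]
    refine squeeze_zero (fun k => (iterate_sub_pos hb hf hs k).le) (iterate_sub_le hb hf hs) ?_
    simpa using (tendsto_pow_atTop_nhds_zero_of_lt_one h0a (by linarith)).mul_const s
  have hnonneg : ∀ k, 0 ≤ f (r k) := fun k =>
    have hrk := iterate_sub_pos hb hf hs k
    ((mul_pos ha hrk).trans (hf _ hrk).1).le
  rw [hasSum_iff_tendsto_nat_of_nonneg hnonneg, funext hpartial]
  simpa using (tendsto_const_nhds (x := s)).sub hr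

end GreedyRemainders

theorem exists_strictAnti_rat_hasSum {s ε : ℝ} (hs : 0 < s) (hε : 0 < ε) :
    ∃ q : ℕ → ℚ, StrictAnti q ∧ (∀ k, 0 < q k ∧ (q k : ℝ) < ε) ∧
      HasSum (fun k => (q k : ℝ)) s := by
  obtain ⟨a, b, ha, hb, hab, hlt, hbs⟩ :
      ∃ a b : ℝ, 0 < a ∧ b ≤ 1 ∧ b * (1 - a) ≤ a ∧ a < b ∧ b * s < ε := by
    refine ⟨ε / (s + 2 * ε), ε / (s + ε), by positivity,
      (div_le_one (by positivity)).2 (by linarith), le_of_eq ?_, ?_, ?_⟩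
    · field_simp
      ring
    · exact div_lt_div_of_pos_left hε (by positivity) (by linarith)
    · rw [div_mul_eq_mul_div, div_lt_iff₀ (by positivity)]
      nlinarith
  have hpick : ∀ x : ℝ, 0 < x → ∃ q : ℚ, a * x < q ∧ (q : ℝ) < b * x := fun x hx =>
    exists_rat_btwn (by nlinarith)
  choose! pick hf using hpick
  have hanti := strictAnti_comp_iterate_sub (f := fun x => (pick x : ℝ)) ha hb hab hf hs
  have hsum := hasSum_comp_iterate_sub (f := fun x => (pick x : ℝ)) ha hb hf hs
  have hpos := iterate_sub_pos (f := fun x => (pick x : ℝ)) hb hf hs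
  refine ⟨fun k => pick ((fun x => x - (pick x : ℝ))^[k] s),
    fun i j hij => Rat.cast_lt.mp (hanti hij), fun k => ⟨?_, ?_⟩, hsum⟩
  · exact_mod_cast (mul_pos ha (hpos k)).trans (hf _ (hpos k)).1
  · calc _ ≤ (pick s : ℝ) := hanti.antitone (Nat.zero_le k)
      _ < b * s := (hf s hs).2
      _ < ε := hbs

theorem exists_injective_rat_family_hasSum_of_nonneg {r : ℝ} (hr : 0 ≤ r) :
    ∃ (ι : Type) (q : ι → ℚ), Function.Injective q ∧ (∀ i, 0 < q i ∧ q i < 1) ∧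
      HasSum (fun i => (q i : ℝ)) r := by
  rcases hr.eq_or_lt with rfl | hr
  · exact ⟨Empty, Empty.elim, fun i => i.elim, fun i => i.elim, hasSum_empty⟩
  obtain ⟨q, hanti, hq, hsum⟩ := exists_strictAnti_rat_hasSum hr one_pos
  exact ⟨ℕ, q, hanti.injective, fun k => ⟨(hq k).1, by exact_mod_cast (hq k).2⟩, hsum⟩

theorem exists_injective_rat_family_hasSum (x : ℝ) :
    ∃ (ι : Type) (q : ι → ℚ), Function.Injective q ∧ (∀ i, q i ≠ 0 ∧ |q i| < 1) ∧
      HasSum (fun i => (q i : ℝ)) x := by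
  obtain ⟨ι₁, q₁, hinj₁, hq₁, hsum₁⟩ :=
    exists_injective_rat_family_hasSum_of_nonneg (le_max_right x 0)
  obtain ⟨ι₂, q₂, hinj₂, hq₂, hsum₂⟩ :=
    exists_injective_rat_family_hasSum_of_nonneg (le_max_right (-x) 0)
  refine ⟨ι₁ ⊕ ι₂, Sum.elim q₁ (fun j => -q₂ j), ?_, ?_, ?_⟩
  · refine hinj₁.sumElim (neg_injective.comp hinj₂) fun i j h => ?_
    linarith [(hq₁ i).1, (hq₂ j).1, h]
  · rintro (i | j) <;> simp only [Sum.elim_inl, Sum.elim_inr]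
    · obtain ⟨h0, h1⟩ := hq₁ i
      exact ⟨h0.ne', abs_lt.2 ⟨by linarith, h1⟩⟩
    · obtain ⟨h0, h1⟩ := hq₂ j
      exact ⟨neg_ne_zero.2 h0.ne', by rwa [abs_neg, abs_of_pos h0]⟩
  · rw [← max_zero_sub_max_neg_zero_eq_self x, sub_eq_add_neg]
    exact HasSum.sum (f := fun i => ((Sum.elim q₁ (fun j => -q₂ j) i : ℚ) : ℝ)) hsum₁
      (by simpa [Function.comp_def] using hsum₂.neg)

theorem ratCast_mem_P {q : ℚ} (hq : |q| < 1) : (q : ℂ) ∈ P := by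
  rcases le_or_gt 0 q with h0 | h0
  · exact Or.inl <| Or.inl <| Or.inl ⟨q, h0, (abs_lt.1 hq).2, rfl⟩
  · refine Or.inl <| Or.inl <| Or.inr ⟨_, ⟨-q, by linarith, by linarith [abs_lt.1 hq], rfl⟩, ?_⟩
    push_cast
    ring

theorem I_mul_ratCast_mem_P {q : ℚ} (hq : |q| < 1) : I * q ∈ P := by
  rcases le_or_gt 0 q with h0 | h0
  · exact Or.inl <| Or.inr ⟨_, ⟨q, h0, (abs_lt.1 hq).2, rfl⟩, rfl⟩
  · refine Or.inr ⟨_, ⟨-q, by linarith, by linarith [abs_lt.1 hq], rfl⟩, ?_⟩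
    push_cast
    ring

theorem exists_injective_range_subset_P_hasSum (ω : ℂ) :
    ∃ (ι : Type) (g : ι → ℂ), Function.Injective g ∧ Set.range g ⊆ P ∧ HasSum g ω := by
  obtain ⟨ι₁, x, hinj₁, hx, hsum₁⟩ := exists_injective_rat_family_hasSum ω.re
  obtain ⟨ι₂, y, hinj₂, hy, hsum₂⟩ := exists_injective_rat_family_hasSum ω.im
  refine ⟨ι₁ ⊕ ι₂, Sum.elim (fun i => (x i : ℂ)) (fun j => I * y j), ?_, ?_, ?_⟩
  · refine (Rat.cast_injective.comp hinj₁).sumElim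
      ((mul_right_injective₀ I_ne_zero).comp (Rat.cast_injective.comp hinj₂)) fun i j h => ?_
    have him := congrArg Complex.im h
    simp only [Function.comp_apply, ratCast_im, mul_im, I_re, ratCast_re, zero_mul, I_im,
      one_mul, zero_add] at him
    exact (hy j).1 (by exact_mod_cast him.symm)
  · rintro _ ⟨i | j, rfl⟩
    · exact ratCast_mem_P (hx i).2
    · exact I_mul_ratCast_mem_P (hy j).2
  · rw [← re_add_im ω, mul_comm _ I]
    refine HasSum.sum (f := Sum.elim (fun i => (x i : ℂ)) (fun j => I * y j)) ?_ ?_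
    · simpa [Function.comp_def] using hasSum_ofReal.2 hsum₁
    · simpa [Function.comp_def] using (hasSum_ofReal.2 hsum₂).mul_left I

theorem exists_equiv_subtype_of_range_subset {α β ι : Type*} (f : α → β) {g : ι → β}
    (hg : Function.Injective g) (h : Set.range g ⊆ Set.range f) :
    ∃ (A : Set α) (e : ι ≃ A), ∀ i, f (e i) = g i := by
  choose k hk using fun i => h ⟨i, rfl⟩
  have hk_inj : Function.Injective k := fun i j hij => hg (by rw [← hk i, ← hk j, hij])
  exact ⟨Set.range k, Equiv.ofInjective k hk_inj, hk⟩

theorem exists_absolutely_summable_subfamily_with_any_sum_general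
    (β : ℕ → ℂ) (hrange : Set.range β = P) :
    ∀ ω : ℂ, ∃ A : Set ℕ,
      Summable (fun n : A => ‖β n‖) ∧
      ∑' n : A, β n = ω := by
  intro ω
  obtain ⟨ι, g, hg, hgP, hsum⟩ := exists_injective_range_subset_P_hasSum ω
  obtain ⟨A, e, he⟩ := exists_equiv_subtype_of_range_subset β hg (hrange ▸ hgP)
  have hA : HasSum (fun n : A => β n) ω := by
    rw [← e.hasSum_iff]
    simpa [Function.comp_def, he] using hsum
  exact ⟨A, summable_norm_iff.2 hA.summable, hA.tsum_eq⟩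

theorem exists_absolutely_summable_subfamily_with_any_sum
    (β : ℕ → ℂ) (hrange : Set.range β = P)
    (hlt : ∀ n, ‖β n‖ < 1) :
    ∀ ω : ℂ, ∃ A : Set ℕ,
      Summable (fun n : A => ‖β n‖) ∧
      ∑' n : A, β n = ω :=
  exists_absolutely_summable_subfamily_with_any_sum_general β hrange
end

section
/- Let A ⊆ ℕ, let β : ℕ → ℂ satisfy |β_n| ≤ 1 for all n; suppose β_n is a positive real number for every n ∈ A and ∑_{n∈A} β_n = +∞ (the partial sums over finite subsets of A are unbounded). Let f_n : (0,∞) → ℂ satisfy: (i) for every n ∉ A, |f_n(r)| ≤ (3/4)^n for all r > 0; (ii) for every n ∈ A, Re(β_n · f_n(r)) ≥ 0 for all r > 0 and f_n(r) → 1 as r → ∞; (iii) for every r > 0 the family (β_n · f_n(r))_{n∈ℕ} is absolutely summable. Then Re(∑_{n=0}^∞ β_n · f_n(r)) → +∞ as r → ∞; in particular |∑_{n=0}^∞ β_n · f_n(r)| → ∞ as r → ∞. -/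
/-!
For `r > 0` the real parts of the terms `β n * f n r` are bounded below by `-(3/4)^n`: they are
nonnegative on `A` and of modulus at most `(3/4)^n` off `A`. Hence for every finite `s ⊆ A` the
real part of the whole sum is at least its partial sum over `s` minus `∑ (3/4)^n = 4`, and that
partial sum tends to `∑ n ∈ s, Re β n` as `r → ∞`, which is unbounded in `s`.
-/

open Complex Filter Topology

lemma Finset.sum_le_hasSum_add_of_neg_le {ι : Type*} {g c : ι → ℝ} {S C : ℝ}
    (hg : HasSum g S) (hc : HasSum c C) (hc0 : 0 ≤ c) (hgc : ∀ n, -c n ≤ g n)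
    (s : Finset ι) : ∑ n ∈ s, g n ≤ S + C :=
  calc ∑ n ∈ s, g n ≤ ∑ n ∈ s, (g n + c n) :=
        Finset.sum_le_sum fun n _ => le_add_of_nonneg_right (hc0 n)
    _ ≤ S + C := sum_le_hasSum s (fun n _ => neg_le_iff_add_nonneg.mp (hgc n)) (hg.add hc)

lemma Complex.neg_le_re_mul_of_norm_le {b z : ℂ} {ε : ℝ} (hb : ‖b‖ ≤ 1) (hz : ‖z‖ ≤ ε) :
    -ε ≤ (b * z).re :=
  calc -ε ≤ -‖b * z‖ := neg_le_neg (by simpa using norm_mul_le_of_le hb hz)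
    _ ≤ (b * z).re := neg_le_of_abs_le (abs_re_le_norm _)

lemma tendsto_atTop_of_hasSum_of_neg_le {α ι : Type*} {l : Filter α} {F : α → ι → ℝ}
    {S : α → ℝ} {c : ι → ℝ} (hc : Summable c) (hc0 : 0 ≤ c)
    (hF : ∀ᶠ a in l, HasSum (F a) (S a) ∧ ∀ n, -c n ≤ F a n)
    (hlarge : ∀ M : ℝ, ∃ s : Finset ι, ∀ᶠ a in l, M < ∑ n ∈ s, F a n) :
    Tendsto S l atTop := by
  refine tendsto_atTop.mpr fun M => ?_
  obtain ⟨s, hs⟩ := hlarge (M + ∑' n, c n)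
  filter_upwards [hF, hs] with a ⟨hsum, hbound⟩ hMs
  linarith [Finset.sum_le_hasSum_add_of_neg_le hsum hc.hasSum hc0 hbound s]

theorem tsum_re_tendsto_atTop_of_divergent_positive_part_general
    (A : Set ℕ) (β : ℕ → ℂ) (f : ℕ → ℝ → ℂ)
    (hβ : ∀ n, ‖β n‖ ≤ 1)
    (hβdiv : ∀ M : ℝ, ∃ s : Finset ℕ, ↑s ⊆ A ∧ M < ∑ n ∈ s, (β n).re)
    (hout_bd : ∀ n ∉ A, ∀ r : ℝ, 0 < r →
      ‖f n r‖ ≤ (3 / 4 : ℝ) ^ n)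
    (hin_re : ∀ n ∈ A, ∀ r : ℝ, 0 < r → 0 ≤ (β n * f n r).re)
    (hin_lim : ∀ n ∈ A, Tendsto (fun r : ℝ => f n r) atTop (𝓝 1))
    (hsum : ∀ r : ℝ, 0 < r → Summable (fun n : ℕ => ‖β n * f n r‖)) :
    Tendsto (fun r : ℝ => (∑' n : ℕ, β n * f n r).re) atTop atTop ∧
      Tendsto (fun r : ℝ => ‖∑' n : ℕ, β n * f n r‖) atTop atTop := by
  have hterm : ∀ r : ℝ, 0 < r → ∀ n, -(3 / 4 : ℝ) ^ n ≤ (β n * f n r).re := by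
    intro r hr n
    by_cases hn : n ∈ A
    · linarith [hin_re n hn r hr, pow_nonneg (by norm_num : (0 : ℝ) ≤ 3 / 4) n]
    · exact neg_le_re_mul_of_norm_le (hβ n) (hout_bd n hn r hr)
  have hfinite : ∀ s : Finset ℕ, ↑s ⊆ A →
      Tendsto (fun r => ∑ n ∈ s, (β n * f n r).re) atTop (𝓝 (∑ n ∈ s, (β n).re)) := by
    intro s hsA
    refine tendsto_finsetSum s fun n hn => ?_
    have := (continuous_re.tendsto _).comp ((hin_lim n (hsA hn)).const_mul (β n))
    rwa [mul_one] at this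
  have hre : Tendsto (fun r => (∑' n, β n * f n r).re) atTop atTop := by
    refine tendsto_atTop_of_hasSum_of_neg_le (F := fun r n => (β n * f n r).re)
      (summable_geometric_of_lt_one (by norm_num : (0 : ℝ) ≤ 3 / 4) (by norm_num))
      (fun n => by positivity) ?_ fun M => ?_
    · filter_upwards [eventually_gt_atTop 0] with r hr
      exact ⟨hasSum_re (hsum r hr).of_norm.hasSum, hterm r hr⟩
    · obtain ⟨s, hsA, hs⟩ := hβdiv M
      exact ⟨s, (hfinite s hsA).eventually (lt_mem_nhds hs)⟩
  exact ⟨hre, tendsto_atTop_mono (fun r => re_le_norm _) hre⟩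

theorem tsum_re_tendsto_atTop_of_divergent_positive_part
    (A : Set ℕ) (β : ℕ → ℂ) (f : ℕ → ℝ → ℂ)
    (hβ : ∀ n, ‖β n‖ ≤ 1)
    (hβpos : ∀ n ∈ A, 0 < (β n).re ∧ (β n).im = 0)
    (hβdiv : ∀ M : ℝ, ∃ s : Finset ℕ, ↑s ⊆ A ∧ M < ∑ n ∈ s, (β n).re)
    (hout_bd : ∀ n ∉ A, ∀ r : ℝ, 0 < r →
      ‖f n r‖ ≤ (3 / 4 : ℝ) ^ n)
    (hin_re : ∀ n ∈ A, ∀ r : ℝ, 0 < r → 0 ≤ (β n * f n r).re)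
    (hin_lim : ∀ n ∈ A, Tendsto (fun r : ℝ => f n r) atTop (𝓝 1))
    (hsum : ∀ r : ℝ, 0 < r → Summable (fun n : ℕ => ‖β n * f n r‖)) :
    Tendsto (fun r : ℝ => (∑' n : ℕ, β n * f n r).re) atTop atTop ∧
      Tendsto (fun r : ℝ => ‖∑' n : ℕ, β n * f n r‖) atTop atTop :=
  tsum_re_tendsto_atTop_of_divergent_positive_part_general A β f hβ hβdiv hout_bd hin_re hin_lim
    hsum
end

section
/- Let (N_n)_{n≥1} be a sequence of positive integers, let (r_n)_{n≥1} be a strictly increasing sequence of real numbers with r_1 > e and r_{n+1} ≥ e·r_n for all n ≥ 1, set λ_n = 1/(8·r_n^{N_n}), and let (β_n)_{n≥1} be complex numbers with |β_n| < 1 for all n. Then the series ∑_{n=1}^∞ β_n · (φ₀(λ_n·z^{N_n}))^n converges locally uniformly on ℂ, and hence defines an entire function φ : ℂ → ℂ. -/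
open Complex MeasureTheory Filter Topology

/-! `φ₀ = ½ (2/√π (G - G 0) - e^{-z²} + 1)` for a primitive `G` of `e^{-w²}`, so `φ₀` is entire, and
`|φ₀(w)| ≤ 1/2` for `|w| ≤ 1/8`. On the disc `|z| ≤ r_{n+1}` the argument `λ_{n+1} z^{N_{n+1}}` has
modulus at most `1/8`, so the `n`-th term is bounded by `2^{-(n+1)}` there. As `r_{n+1} ≥ e^n r_1 → ∞`,
each compact set lies in all but finitely many of these discs, and the Weierstrass M-test gives locally
uniform convergence; a locally uniform limit of entire functions is entire. -/

open Metric

theorem intervalIntegral_mul_comp_ofReal_mul_eq_sub {f G : ℂ → ℂ} (hf : Continuous f)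
    (hG : ∀ w, HasDerivAt G (f w) w) (z : ℂ) :
    ∫ t in (0:ℝ)..1, z * f (t * z) = G z - G 0 := by
  have hderiv : ∀ t : ℝ, HasDerivAt (fun s : ℝ => G (s * z)) (z * f (t * z)) t := fun t => by
    have := ((hG (t * z)).comp (t : ℂ) ((hasDerivAt_id (t : ℂ)).mul_const z)).comp_ofReal
    simpa [mul_comm z] using this
  rw [intervalIntegral.integral_eq_sub_of_hasDerivAt (fun t _ => hderiv t)
    (by apply Continuous.intervalIntegrable; fun_prop)]
  simp

theorem differentiable_phi0 : Differentiable ℂ phi0 := by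
  obtain ⟨G, hG⟩ :=
    (show Differentiable ℂ fun w : ℂ => exp (-w ^ 2) by fun_prop).isExactOn_univ
  have hG' : ∀ w, HasDerivAt G (exp (-w ^ 2)) w := fun w => hG w trivial
  have hphi0 : phi0 = fun z => (1 / 2) * ((2 / (Real.sqrt Real.pi : ℂ)) * (G z - G 0)
      - exp (-z ^ 2) + 1) := by
    funext z
    rw [phi0, intervalIntegral_mul_comp_ofReal_mul_eq_sub (f := fun w => exp (-w ^ 2))
      (by fun_prop) hG' z]
  have hGd : Differentiable ℂ G := fun w => (hG' w).differentiableAt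
  rw [hphi0]
  fun_prop

theorem norm_intervalIntegral_exp_neg_sq_le {w : ℂ} (hw : ‖w‖ ≤ 1) :
    ‖∫ t in (0:ℝ)..1, w * exp (-((t : ℂ) * w) ^ 2)‖ ≤ 3 * ‖w‖ := by
  have hpt : ∀ t ∈ Set.uIoc (0:ℝ) 1, ‖w * exp (-((t : ℂ) * w) ^ 2)‖ ≤ 3 * ‖w‖ := by
    intro t ht
    rw [Set.uIoc_of_le zero_le_one] at ht
    have hexponent : ‖-((t : ℂ) * w) ^ 2‖ ≤ 1 := by
      rw [norm_neg, norm_pow, norm_mul, Complex.norm_real, Real.norm_of_nonneg ht.1.le]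
      exact pow_le_one₀ (mul_nonneg ht.1.le (norm_nonneg w)) (mul_le_one₀ ht.2 (norm_nonneg w) hw)
    calc ‖w * exp (-((t : ℂ) * w) ^ 2)‖
        ≤ ‖w‖ * Real.exp 1 := by
          rw [norm_mul]
          gcongr
          exact (norm_exp_le_exp_norm _).trans (Real.exp_le_exp.2 hexponent)
      _ ≤ 3 * ‖w‖ := by nlinarith [Real.exp_one_lt_d9, norm_nonneg w]
  simpa using intervalIntegral.norm_integral_le_of_norm_le_const hpt

theorem norm_phi0_le_half {w : ℂ} (hw : ‖w‖ ≤ 1 / 8) : ‖phi0 w‖ ≤ 1 / 2 := by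
  have hw1 : ‖w‖ ≤ 1 := hw.trans (by norm_num)
  have hsq : ‖-w ^ 2‖ ≤ 1 / 64 := by
    rw [norm_neg, norm_pow]
    nlinarith [norm_nonneg w]
  have hcoef : ‖(2 / (Real.sqrt Real.pi : ℂ))‖ ≤ 2 := by
    rw [norm_div, Complex.norm_real, Real.norm_of_nonneg (Real.sqrt_nonneg _), Complex.norm_two]
    exact div_le_self zero_le_two (Real.one_le_sqrt.2 (by linarith [Real.pi_gt_three]))
  have hint := norm_intervalIntegral_exp_neg_sq_le hw1
  have hexp : ‖exp (-w ^ 2) - 1‖ ≤ 2 * (1 / 64) :=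
    (norm_exp_sub_one_le (hsq.trans (by norm_num))).trans (by linarith)
  have hsplit : phi0 w = (1 / 2) * ((2 / (Real.sqrt Real.pi : ℂ)) *
      (∫ t in (0:ℝ)..1, w * exp (-((t : ℂ) * w) ^ 2)) - (exp (-w ^ 2) - 1)) := by
    rw [phi0]; ring
  rw [hsplit, norm_mul]
  calc ‖(1 / 2 : ℂ)‖ * ‖_ - _‖
      ≤ 1 / 2 * (2 * (3 * ‖w‖) + 2 * (1 / 64)) := by
        rw [show ‖(1 / 2 : ℂ)‖ = 1 / 2 by norm_num]
        gcongr
        refine (norm_sub_le _ _).trans (add_le_add ?_ hexp)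
        rw [norm_mul]
        exact mul_le_mul hcoef hint (norm_nonneg _) zero_le_two
    _ ≤ 1 / 2 := by linarith

theorem norm_ofReal_one_div_mul_pow_le {r : ℝ} {z : ℂ} (hz : ‖z‖ ≤ r) (N : ℕ) :
    ‖((1 / (8 * r ^ N) : ℝ) : ℂ) * z ^ N‖ ≤ 1 / 8 := by
  have hr : 0 ≤ r := (norm_nonneg z).trans hz
  rw [norm_mul, norm_pow, Complex.norm_real, Real.norm_of_nonneg (by positivity)]
  calc 1 / (8 * r ^ N) * ‖z‖ ^ N ≤ 1 / (8 * r ^ N) * r ^ N := by gcongr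
    _ = 1 / 8 * (r ^ N / r ^ N) := by ring
    _ ≤ 1 / 8 := mul_le_of_le_one_right (by norm_num) (div_self_le_one _)

theorem tendstoLocallyUniformly_sum_range_of_eventually_norm_le_on_closedBall
    {X E : Type*} [PseudoMetricSpace X] [ProperSpace X] [NormedAddCommGroup E] [CompleteSpace E]
    {F : ℕ → X → E} {u : ℕ → ℝ} (hu : Summable u) (x₀ : X)
    (hF : ∀ R, ∀ᶠ n in atTop, ∀ x ∈ closedBall x₀ R, ‖F n x‖ ≤ u n) :
    TendstoLocallyUniformly (fun m x => ∑ n ∈ Finset.range m, F n x)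
      (fun x => ∑' n, F n x) atTop := by
  rw [tendstoLocallyUniformly_iff_forall_isCompact]
  intro K hK
  obtain ⟨R, hKR⟩ := hK.isBounded.subset_closedBall x₀
  exact tendstoUniformlyOn_tsum_nat_eventually hu
    ((hF R).mono fun n hn x hx => hn x (hKR hx))

theorem TendstoLocallyUniformly.differentiable {F : ℕ → ℂ → ℂ} {f : ℂ → ℂ}
    (hFf : TendstoLocallyUniformly F f atTop) (hF : ∀ n, Differentiable ℂ (F n)) :
    Differentiable ℂ f := by
  rw [← differentiableOn_univ]
  exact (tendstoLocallyUniformlyOn_univ.2 hFf).differentiableOn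
    (Eventually.of_forall fun n => (hF n).differentiableOn) isOpen_univ

theorem series_defining_phi_converges_locally_uniformly_general
    (N : ℕ → ℕ)
    (r : ℕ → ℝ)
    (hr1 : Real.exp 1 < r 1)
    (hrstep : ∀ n ≥ 1, Real.exp 1 * r n ≤ r (n + 1))
    (lam : ℕ → ℝ) (hlam : ∀ n ≥ 1, lam n = 1 / (8 * r n ^ N n))
    (β : ℕ → ℂ) (hβ : ∀ n ≥ 1, ‖β n‖ < 1) :
    TendstoLocallyUniformly
        (fun (m : ℕ) (z : ℂ) =>
          ∑ n ∈ Finset.range m, β (n + 1) *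
            (phi0 ((lam (n + 1) : ℂ) * z ^ N (n + 1))) ^ (n + 1))
        (fun z : ℂ =>
          ∑' n : ℕ, β (n + 1) *
            (phi0 ((lam (n + 1) : ℂ) * z ^ N (n + 1))) ^ (n + 1))
        atTop ∧
      Differentiable ℂ
        (fun z : ℂ =>
          ∑' n : ℕ, β (n + 1) *
            (phi0 ((lam (n + 1) : ℂ) * z ^ N (n + 1))) ^ (n + 1)) := by
  have hr : Tendsto (fun n => r (n + 1)) atTop atTop :=
    tendsto_atTop_of_geom_le ((Real.exp_pos 1).trans hr1) (Real.one_lt_exp_iff.2 one_pos)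
      fun n => hrstep (n + 1) (by omega)
  have hbound : ∀ R, ∀ᶠ n in atTop, ∀ z ∈ closedBall (0 : ℂ) R,
      ‖β (n + 1) * (phi0 ((lam (n + 1) : ℂ) * z ^ N (n + 1))) ^ (n + 1)‖ ≤ (1 / 2) ^ (n + 1) := by
    intro R
    filter_upwards [hr.eventually_ge_atTop R] with n hn z hz
    have hw := norm_ofReal_one_div_mul_pow_le
      ((mem_closedBall_zero_iff.1 hz).trans hn) (N (n + 1))
    rw [← hlam (n + 1) (by omega)] at hw
    rw [norm_mul, norm_pow]
    exact (mul_le_of_le_one_left (by positivity) (hβ (n + 1) (by omega)).le).trans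
      (pow_le_pow_left₀ (norm_nonneg _) (norm_phi0_le_half hw) _)
  have hTLU := tendstoLocallyUniformly_sum_range_of_eventually_norm_le_on_closedBall
    ((summable_nat_add_iff 1).2 summable_geometric_two) 0 hbound
  exact ⟨hTLU, hTLU.differentiable fun m =>
    Differentiable.fun_sum fun n _ => (differentiable_phi0.comp (by fun_prop)).pow _ |>.const_mul _⟩

theorem series_defining_phi_converges_locally_uniformly
    (N : ℕ → ℕ) (hN : ∀ n ≥ 1, 0 < N n)
    (r : ℕ → ℝ)
    (hr1 : Real.exp 1 < r 1)
    (hrmono : ∀ n ≥ 1, r n < r (n + 1))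
    (hrstep : ∀ n ≥ 1, Real.exp 1 * r n ≤ r (n + 1))
    (lam : ℕ → ℝ) (hlam : ∀ n ≥ 1, lam n = 1 / (8 * r n ^ N n))
    (β : ℕ → ℂ) (hβ : ∀ n ≥ 1, ‖β n‖ < 1) :
    TendstoLocallyUniformly
        (fun (m : ℕ) (z : ℂ) =>
          ∑ n ∈ Finset.range m, β (n + 1) *
            (phi0 ((lam (n + 1) : ℂ) * z ^ N (n + 1))) ^ (n + 1))
        (fun z : ℂ =>
          ∑' n : ℕ, β (n + 1) *
            (phi0 ((lam (n + 1) : ℂ) * z ^ N (n + 1))) ^ (n + 1))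
        atTop ∧
      Differentiable ℂ
        (fun z : ℂ =>
          ∑' n : ℕ, β (n + 1) *
            (phi0 ((lam (n + 1) : ℂ) * z ^ N (n + 1))) ^ (n + 1)) :=
  series_defining_phi_converges_locally_uniformly_general N r hr1 hrstep lam hlam β hβ
end
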